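/- arXiv:1206.3591 — 4 statements merged into one kernel-verified Lean document; each statement's English description precedes it below -/
import Mathlib

section
/- For a forest F with n vertices and c components (n ≥ c ≥ 1), the number of partitions of the vertex set of F into k non-empty independent sets equals Σ_{i≥0} C(c-1, i) · S(n-1-i, k-1), where S(·,·) denotes the Stirling numbers of the second kind. -/
open Finset SimpleGraph Polynomial

/-- Stirling numbers of the second kind. -/
def stirling2 : ℕ → ℕ → ℕ
  | 0, 0 => 1
  | 0, _ + 1 => 0
  | _ + 1, 0 => 0
  | n + 1, k + 1 => (k + 1) * stirling2 n (k + 1) + stirling2 n k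

/-- Bell numbers. -/
def bell (n : ℕ) : ℕ := ∑ k ∈ Finset.range (n + 1), stirling2 n k

/-- `graphStirling G k` is the number of partitions of the vertex set of `G`
into exactly `k` non-empty independent sets. -/
noncomputable def graphStirling {V : Type} [Fintype V] [DecidableEq V] (G : SimpleGraph V) (k : ℕ) : ℕ :=
  Nat.card {P : Finpartition (Finset.univ : Finset V) //
    P.parts.card = k ∧ ∀ p ∈ P.parts, ∀ u ∈ p, ∀ v ∈ p, ¬ G.Adj u v}

/-- The number of proper colorings of `G` with `x` colors
(the chromatic polynomial evaluated at `x`). -/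
noncomputable def chromaticCount {V : Type} [Fintype V] (G : SimpleGraph V) (x : ℕ) : ℕ :=
  Nat.card {f : V → Fin x // ∀ u v, G.Adj u v → f u ≠ f v}


/-!
Deleting a leaf `v` with neighbour `u` keeps the number of components and gives
`S(F, k + 1) = S(F - v, k) + k * S(F - v, k + 1)`: in a partition of `F`, either `v` is a
singleton block, or it joins one of the `k` blocks of `F - v` not containing `u`. The closed form
obeys the same recursion in `n` by the Stirling recurrence `S(m + 1, k + 1) = (k + 1) S(m, k + 1)
+ S(m, k)`, so removing leaves reduces the claim to the edgeless graph on `c` vertices, where it is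
the classical identity `S(m + 1, k + 1) = ∑ i, C(m, i) S(m - i, k)`.
-/

theorem sum_range_mul_stirling2_succ_sub_zero (a : ℕ → ℕ) {c m : ℕ} (hc : c ≤ m + 1) :
    ∑ i ∈ range c, a i * stirling2 (m + 1 - i) 0 = 0 :=
  sum_eq_zero fun i hi => by
    rw [Nat.sub_add_comm (by grind), stirling2, mul_zero]

theorem sum_range_mul_stirling2_succ_sub_succ (a : ℕ → ℕ) {c m : ℕ} (hc : c ≤ m + 1)
    (k : ℕ) :
    ∑ i ∈ range c, a i * stirling2 (m + 1 - i) (k + 1) =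
      (k + 1) * ∑ i ∈ range c, a i * stirling2 (m - i) (k + 1) +
        ∑ i ∈ range c, a i * stirling2 (m - i) k := by
  rw [mul_sum, ← sum_add_distrib]
  refine sum_congr rfl fun i hi => ?_
  rw [Nat.sub_add_comm (by grind), stirling2]
  ring

theorem stirling2_succ_succ_eq_sum (n k : ℕ) :
    stirling2 (n + 1) (k + 1) = ∑ i ∈ range (n + 1), n.choose i * stirling2 (n - i) k := by
  induction n generalizing k with
  | zero => cases k <;> rfl
  | succ n ih =>
    have pascal := sum_choose_succ_mul (fun _ j => stirling2 j k) n
    simp only [Nat.cast_id] at pascal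
    rw [pascal, ← ih]
    cases k with
    | zero =>
      simp only [sum_range_mul_stirling2_succ_sub_zero _ le_rfl, stirling2, zero_add, one_mul,
        add_zero]
    | succ k =>
      rw [sum_range_mul_stirling2_succ_sub_succ _ le_rfl, ← ih, ← ih, stirling2]
      ring

section IndepPartition

/-! Partitions are handled as bare families of blocks rather than as `Finpartition`s, so that the
ground set can change along the induction. -/

variable {V : Type} {G : SimpleGraph V} {s : Finset V} {v : V} {C D : Finset (Finset V)}
  {p : Finset V}

structure IsIndepPartition (G : SimpleGraph V) (s : Finset V) (C : Finset (Finset V)) : Prop where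
  subset : ∀ p ∈ C, p ⊆ s
  exists_mem : ∀ a ∈ s, ∃ p ∈ C, a ∈ p
  eq_of_mem : ∀ p ∈ C, ∀ q ∈ C, ∀ a ∈ p, a ∈ q → p = q
  empty_notMem : ∅ ∉ C
  indep : ∀ p ∈ C, ∀ a ∈ p, ∀ b ∈ p, ¬ G.Adj a b

theorem IsIndepPartition.notMem_of_notMem (hC : IsIndepPartition G s C) (hv : v ∉ s) :
    ∀ p ∈ C, v ∉ p :=
  fun p hp h => hv (hC.subset p hp h)

open Classical in
noncomputable def indepPartitions (G : SimpleGraph V) (s : Finset V) (k : ℕ) :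
    Finset (Finset (Finset V)) :=
  {C ∈ s.powerset.powerset | IsIndepPartition G s C ∧ #C = k}

theorem mem_indepPartitions {k : ℕ} :
    C ∈ indepPartitions G s k ↔ IsIndepPartition G s C ∧ #C = k := by
  simp only [indepPartitions, mem_filter, mem_powerset, and_iff_right_iff_imp]
  exact fun h p hp => mem_powerset.2 (h.1.subset p hp)

theorem isIndepPartition_empty_iff : IsIndepPartition G ∅ C ↔ C = ∅ := by
  refine ⟨fun hC => eq_empty_of_forall_notMem fun p hp => ?_, ?_⟩
  · exact hC.empty_notMem (subset_empty.1 (hC.subset p hp) ▸ hp)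
  · rintro rfl
    exact ⟨by simp, by simp, by simp, notMem_empty _, by simp⟩

theorem card_indepPartitions_empty (k : ℕ) : #(indepPartitions G ∅ k) = stirling2 0 k := by
  have : indepPartitions G ∅ k = if k = 0 then {∅} else ∅ := by
    ext C
    rw [mem_indepPartitions, isIndepPartition_empty_iff]
    split_ifs with hk <;> grind [card_empty]
  cases k <;> simp [this, stirling2]

theorem indepPartitions_zero (hs : s.Nonempty) : indepPartitions G s 0 = ∅ := by
  refine eq_empty_of_forall_notMem fun C hC => ?_
  obtain ⟨hC, hcard⟩ := mem_indepPartitions.1 hC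
  obtain ⟨a, ha⟩ := hs
  obtain ⟨p, hp, -⟩ := hC.exists_mem a ha
  exact notMem_empty p (card_eq_zero.1 hcard ▸ hp)

theorem IsIndepPartition.existsUnique_mem (hC : IsIndepPartition G s C) {a : V} (ha : a ∈ s) :
    ∃! p, p ∈ C ∧ a ∈ p :=
  let ⟨p, hp, hap⟩ := hC.exists_mem a ha
  ⟨p, ⟨hp, hap⟩, fun q hq => hC.eq_of_mem q hq.1 p hp a hq.2 hap⟩

variable [DecidableEq V]

namespace IsIndepPartition

theorem insert_singleton (hC : IsIndepPartition G s C) (hv : v ∉ s) :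
    IsIndepPartition G (insert v s) (insert {v} C) where
  subset := by
    simp only [mem_insert, forall_eq_or_imp, singleton_subset_iff, true_or, true_and]
    exact fun p hp => (hC.subset p hp).trans (subset_insert v s)
  exists_mem := by
    simp only [mem_insert, forall_eq_or_imp]
    exact ⟨⟨{v}, by simp⟩, fun a ha => by grind [hC.exists_mem a ha]⟩
  eq_of_mem := by grind [hC.eq_of_mem, hC.notMem_of_notMem hv]
  empty_notMem := by grind [hC.empty_notMem, singleton_ne_empty]
  indep := by grind [hC.indep, SimpleGraph.irrefl]

theorem insert_insert_erase (hC : IsIndepPartition G s C) (hv : v ∉ s) (hp : p ∈ C)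
    (hvp : ∀ u ∈ p, ¬ G.Adj v u) :
    IsIndepPartition G (insert v s) (insert (insert v p) (C.erase p)) where
  subset := by
    simp only [mem_insert, mem_erase, forall_eq_or_imp, and_imp]
    exact ⟨insert_subset_insert v (hC.subset p hp),
      fun q _ hq => (hC.subset q hq).trans (subset_insert v s)⟩
  exists_mem a ha := by
    rcases mem_insert.1 ha with rfl | ha
    · exact ⟨_, mem_insert_self _ _, mem_insert_self _ _⟩
    obtain ⟨q, hq, haq⟩ := hC.exists_mem a ha
    by_cases hqp : q = p
    · exact ⟨_, mem_insert_self _ _, mem_insert_of_mem (hqp ▸ haq)⟩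
    · exact ⟨q, mem_insert_of_mem (mem_erase.2 ⟨hqp, hq⟩), haq⟩
  eq_of_mem := by
    have := hC.eq_of_mem
    have := hC.notMem_of_notMem hv
    simp only [mem_insert, mem_erase]
    grind
  empty_notMem := by
    simpa [hC.empty_notMem] using (insert_ne_empty v p).symm
  indep := by
    have := hC.indep
    simp only [mem_insert, mem_erase]
    grind [SimpleGraph.adj_symm, SimpleGraph.irrefl]

theorem card_insert_singleton (hC : IsIndepPartition G s C) (hv : v ∉ s) :
    #(insert {v} C) = #C + 1 :=
  card_insert_of_notMem fun h => hC.notMem_of_notMem hv _ h (mem_singleton_self v)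

theorem card_insert_insert_erase (hC : IsIndepPartition G s C) (hv : v ∉ s) (hp : p ∈ C) :
    #(insert (insert v p) (C.erase p)) = #C := by
  rw [card_insert_of_notMem fun h => hC.notMem_of_notMem hv _ (mem_of_mem_erase h)
    (mem_insert_self v p), card_erase_add_one hp]

theorem eq_of_insert_singleton_eq {C' : Finset (Finset V)} (hC : IsIndepPartition G s C)
    (hC' : IsIndepPartition G s C') (hv : v ∉ s) (h : insert {v} C = insert {v} C') :
    C = C' := by
  have hvC := fun h => hC.notMem_of_notMem hv {v} h (mem_singleton_self v)
  have hvC' := fun h => hC'.notMem_of_notMem hv {v} h (mem_singleton_self v)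
  rw [← erase_insert hvC, h, erase_insert hvC']

theorem insert_singleton_ne_insert_insert_erase {C' : Finset (Finset V)}
    (hC' : IsIndepPartition G s C') (hv : v ∉ s) (hp : p ∈ C') :
    insert {v} C ≠ insert (insert v p) (C'.erase p) := by
  intro h
  have hmem : {v} ∈ insert (insert v p) (C'.erase p) := h ▸ mem_insert_self _ _
  simp only [mem_insert, mem_erase] at hmem
  rcases hmem with hsingle | ⟨-, hmem⟩
  · obtain ⟨a, ha⟩ := nonempty_iff_ne_empty.2 (ne_of_mem_of_not_mem hp hC'.empty_notMem)
    have hav : a = v := mem_singleton.1 (hsingle ▸ mem_insert_of_mem ha)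
    exact hC'.notMem_of_notMem hv p hp (hav ▸ ha)
  · exact hC'.notMem_of_notMem hv _ hmem (mem_singleton_self v)

theorem eq_of_insert_insert_erase_eq {C' : Finset (Finset V)} {p' : Finset V}
    (hC : IsIndepPartition G s C) (hC' : IsIndepPartition G s C') (hv : v ∉ s)
    (hp : p ∈ C) (hp' : p' ∈ C')
    (h : insert (insert v p) (C.erase p) = insert (insert v p') (C'.erase p')) :
    C = C' ∧ p = p' := by
  have hvC := hC.notMem_of_notMem hv
  have hvC' := hC'.notMem_of_notMem hv
  have hpart : insert v p = insert v p' := by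
    have hmem : insert v p ∈ insert (insert v p') (C'.erase p') := h ▸ mem_insert_self _ _
    simp only [mem_insert, mem_erase] at hmem
    grind
  have hpp' : p = p' := by
    rw [← erase_insert (hvC p hp), hpart, erase_insert (hvC' p' hp')]
  subst hpp'
  have hrest : C.erase p = C'.erase p := by
    rw [← erase_insert (s := C.erase p) (a := insert v p) (by grind), h,
      erase_insert (by grind)]
  refine ⟨?_, rfl⟩
  rw [← insert_erase hp, hrest, insert_erase hp']

theorem eq_insert_singleton_or_eq_insert_insert_erase (hD : IsIndepPartition G (insert v s) D)
    (hv : v ∉ s) :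
    (∃ C, IsIndepPartition G s C ∧ D = insert {v} C) ∨
      ∃ C p, IsIndepPartition G s C ∧ p ∈ C ∧ (∀ u ∈ p, ¬ G.Adj v u) ∧
        D = insert (insert v p) (C.erase p) := by
  obtain ⟨p₀, hp₀, hvp₀⟩ := hD.exists_mem v (mem_insert_self v s)
  obtain ⟨hsub, hex, heq, hemp, hind⟩ := hD
  by_cases hsingle : p₀ = {v}
  · subst hsingle
    refine Or.inl ⟨D.erase {v}, ⟨?_, ?_, ?_, ?_, ?_⟩, (insert_erase hp₀).symm⟩
    all_goals simp only [mem_erase]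
    all_goals grind
  · obtain ⟨a, hap₀, hav⟩ : ∃ a ∈ p₀, a ≠ v := by
      by_contra! h
      exact hsingle (eq_singleton_iff_unique_mem.2 ⟨hvp₀, h⟩)
    have hrest : p₀.erase v ∉ D.erase p₀ := by
      simp only [mem_erase]
      grind
    refine Or.inr ⟨insert (p₀.erase v) (D.erase p₀), p₀.erase v, ⟨?_, ?_, ?_, ?_, ?_⟩,
      mem_insert_self _ _, ?_, ?_⟩
    rotate_right
    · rw [insert_erase hvp₀, erase_insert hrest, insert_erase hp₀]
    all_goals simp only [mem_insert, mem_erase]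
    all_goals grind

end IsIndepPartition

open Classical in
theorem card_indepPartitions_insert (hv : v ∉ s) (k : ℕ) :
    #(indepPartitions G (insert v s) (k + 1)) =
      #(indepPartitions G s k) +
        ∑ C ∈ indepPartitions G s (k + 1), #{p ∈ C | ∀ u ∈ p, ¬ G.Adj v u} := by
  rw [← card_sigma, ← card_disjSum]
  symm
  refine card_nbij (Sum.elim (insert {v}) fun x => insert (insert v x.2) (x.1.erase x.2))
    ?_ ?_ ?_
  · rintro (C | ⟨C, p⟩) hx <;> simp only [Sum.elim_inl, Sum.elim_inr]
    · obtain ⟨hC, hcard⟩ := mem_indepPartitions.1 (inl_mem_disjSum.1 hx)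
      exact mem_indepPartitions.2
        ⟨hC.insert_singleton hv, by rw [hC.card_insert_singleton hv, hcard]⟩
    · obtain ⟨hC, hp⟩ : C ∈ _ ∧ p ∈ _ := mem_sigma.1 (inr_mem_disjSum.1 hx)
      obtain ⟨hC, hcard⟩ := mem_indepPartitions.1 hC
      obtain ⟨hp, hvp⟩ := mem_filter.1 hp
      exact mem_indepPartitions.2
        ⟨hC.insert_insert_erase hv hp hvp, by rw [hC.card_insert_insert_erase hv hp, hcard]⟩
  · rintro (C | ⟨C, p⟩) hx (C' | ⟨C', p'⟩) hy h
    all_goals simp only [mem_coe, inl_mem_disjSum, inr_mem_disjSum, mem_sigma,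
      mem_filter, mem_indepPartitions] at hx hy
    all_goals simp only [Sum.elim_inl, Sum.elim_inr] at h
    · rw [hx.1.eq_of_insert_singleton_eq hy.1 hv h]
    · exact absurd h (hy.1.1.insert_singleton_ne_insert_insert_erase hv hy.2.1)
    · exact absurd h.symm (hx.1.1.insert_singleton_ne_insert_insert_erase hv hx.2.1)
    · obtain ⟨rfl, rfl⟩ := hx.1.1.eq_of_insert_insert_erase_eq hy.1.1 hv hx.2.1 hy.2.1 h
      rfl
  · intro D hD
    obtain ⟨hD, hcard⟩ := mem_indepPartitions.1 hD
    rcases hD.eq_insert_singleton_or_eq_insert_insert_erase hv with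
      ⟨C, hC, rfl⟩ | ⟨C, p, hC, hp, hvp, rfl⟩
    · refine ⟨Sum.inl C, inl_mem_disjSum.2 (mem_indepPartitions.2 ⟨hC, ?_⟩), rfl⟩
      rw [hC.card_insert_singleton hv] at hcard
      omega
    · refine ⟨Sum.inr ⟨C, p⟩, inr_mem_disjSum.2 (mem_sigma.2
        ⟨mem_indepPartitions.2 ⟨hC, ?_⟩, mem_filter.2 ⟨hp, hvp⟩⟩), rfl⟩
      rwa [hC.card_insert_insert_erase hv hp] at hcard

open Classical in
theorem card_indepPartitions_insert_of_forall_not_adj (hv : v ∉ s)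
    (hiso : ∀ u ∈ s, ¬ G.Adj v u) (k : ℕ) :
    #(indepPartitions G (insert v s) (k + 1)) =
      #(indepPartitions G s k) + (k + 1) * #(indepPartitions G s (k + 1)) := by
  rw [card_indepPartitions_insert hv, mul_comm, ← smul_eq_mul, ← sum_const]
  refine congrArg _ (sum_congr rfl fun C hC => ?_)
  obtain ⟨hC, hcard⟩ := mem_indepPartitions.1 hC
  rw [filter_true_of_mem fun p hp u hu => hiso u (hC.subset p hp hu), hcard]

open Classical in
theorem card_indepPartitions_insert_leaf (hv : v ∉ s) {u : V} (hu : u ∈ s)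
    (hvu : G.Adj v u) (huniq : ∀ w ∈ s, G.Adj v w → w = u) (k : ℕ) :
    #(indepPartitions G (insert v s) (k + 1)) =
      #(indepPartitions G s k) + k * #(indepPartitions G s (k + 1)) := by
  rw [card_indepPartitions_insert hv, mul_comm, ← smul_eq_mul, ← sum_const]
  refine congrArg _ (sum_congr rfl fun C hC => ?_)
  obtain ⟨hC, hcard⟩ := mem_indepPartitions.1 hC
  obtain ⟨p₀, hp₀, hup₀⟩ := hC.exists_mem u hu
  have : {p ∈ C | ∀ w ∈ p, ¬ G.Adj v w} = C.erase p₀ := by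
    ext p
    simp only [mem_filter, mem_erase]
    constructor
    · rintro ⟨hp, hpv⟩
      exact ⟨fun h => hpv u (h ▸ hup₀) hvu, hp⟩
    · rintro ⟨hne, hp⟩
      refine ⟨hp, fun w hw hvw => hne ?_⟩
      exact hC.eq_of_mem p hp p₀ hp₀ u (huniq w (hC.subset p hp hw) hvw ▸ hw) hup₀
  rw [this, card_erase_of_mem hp₀, hcard, Nat.add_sub_cancel]

theorem card_indepPartitions_of_forall_not_adj (h : ∀ a ∈ s, ∀ b ∈ s, ¬ G.Adj a b)
    (k : ℕ) :
    #(indepPartitions G s k) = stirling2 #s k := by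
  induction s using Finset.induction_on generalizing k with
  | empty => exact card_indepPartitions_empty k
  | insert v s hv ih =>
    have h' : ∀ a ∈ s, ∀ b ∈ s, ¬ G.Adj a b := fun a ha b hb =>
      h a (mem_insert_of_mem ha) b (mem_insert_of_mem hb)
    rw [card_insert_of_notMem hv]
    cases k with
    | zero => rw [indepPartitions_zero (insert_nonempty v s), card_empty]; rfl
    | succ k =>
      rw [card_indepPartitions_insert_of_forall_not_adj hv
        (fun u hu => h v (mem_insert_self v s) u (mem_insert_of_mem hu)), ih h', ih h', stirling2]
      ring

end IndepPartition

namespace SimpleGraph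

variable {W : Type} {H : SimpleGraph W}

theorem IsAcyclic.exists_adj_forall_adj_eq [Finite W] (hH : H.IsAcyclic) {a b : W}
    (hab : H.Adj a b) : ∃ v u, H.Adj v u ∧ ∀ w, H.Adj v w → w = u := by
  have : Nonempty W := ⟨a⟩
  obtain ⟨u, v, p, hp, hmax⟩ := Walk.exists_isPath_forall_isPath_length_le_length H
  have hnil : ¬ p.Nil := by
    have := hmax a b (Walk.cons hab Walk.nil) (by simp [hab.ne])
    rw [← Walk.length_eq_zero_iff]
    simp only [Walk.length_cons, Walk.length_nil] at this
    omega
  -- the start of a longest path is a leaf: a neighbour off the path would extend it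
  refine ⟨u, p.snd, p.adj_snd hnil, fun w hw => hH.eq_snd_of_adj_start hp hw ?_⟩
  by_contra hwp
  have := hmax w v (p.cons hw.symm) (hp.cons hwp)
  simp only [Walk.length_cons] at this
  omega

theorem card_connectedComponent_le [Finite W] (H : SimpleGraph W) :
    Nat.card H.ConnectedComponent ≤ Nat.card W :=
  Nat.card_le_card_of_surjective _ Quot.mk_surjective

theorem card_connectedComponent_of_forall_not_adj (h : ∀ a b, ¬ H.Adj a b) :
    Nat.card H.ConnectedComponent = Nat.card W := by
  refine (Nat.card_eq_of_bijective H.connectedComponentMk ⟨fun a b hab => ?_,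
    Quot.mk_surjective⟩).symm
  obtain ⟨w⟩ := ConnectedComponent.eq.1 hab
  cases w with
  | nil => rfl
  | cons hadj _ => exact absurd hadj (h _ _)

variable {V : Type} {G : SimpleGraph V}

theorem IsAcyclic.exists_adj_forall_adj_eq_induce (hG : G.IsAcyclic) {s : Finset V}
    (h : ∃ a ∈ s, ∃ b ∈ s, G.Adj a b) :
    ∃ v ∈ s, ∃ u ∈ s, G.Adj v u ∧ ∀ w ∈ s, G.Adj v w → w = u := by
  obtain ⟨a, ha, b, hb, hab⟩ := h
  obtain ⟨v, u, hvu, huniq⟩ :=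
    (hG.induce (s : Set V)).exists_adj_forall_adj_eq (a := ⟨a, ha⟩) (b := ⟨b, hb⟩) hab
  exact ⟨v, v.2, u, u.2, hvu, fun w hw hvw => congrArg Subtype.val (huniq ⟨w, hw⟩ hvw)⟩

/-- The retraction of the leaf `v` onto its neighbour `u` preserves reachability. -/
theorem card_connectedComponent_induce_insert {t : Set V} {v u : V} (hv : v ∉ t) (hu : u ∈ t)
    (hvu : G.Adj v u) (huniq : ∀ w ∈ t, G.Adj v w → w = u) :
    Nat.card (G.induce (insert v t)).ConnectedComponent =
      Nat.card (G.induce t).ConnectedComponent := by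
  classical
  let ι := (G.induceHomOfLE (Set.subset_insert v t)).toHom
  let r : ↥(insert v t) → ↥t := fun x =>
    if hx : x.1 = v then ⟨u, hu⟩ else ⟨x.1, x.2.resolve_left hx⟩
  have hrt : ∀ (x : ↥(insert v t)) (hx : x.1 ∈ t), r x = ⟨x, hx⟩ :=
    fun x hx => dif_neg (ne_of_mem_of_not_mem hx hv)
  have hleaf : ∀ x y : ↥(insert v t), x.1 = v → G.Adj x y → r x = r y := by
    rintro x ⟨y, hy⟩ hxv hxy
    have hyt : y ∈ t := hy.resolve_left (hxv ▸ hxy.ne')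
    rw [show r x = ⟨u, hu⟩ from dif_pos hxv, hrt _ hyt]
    exact Subtype.ext (huniq y hyt (hxv ▸ hxy)).symm
  have hadj : ∀ x y, (G.induce (insert v t)).Adj x y → (G.induce t).Reachable (r x) (r y) := by
    intro x y hxy
    by_cases hxv : x.1 = v
    · rw [hleaf x y hxv hxy]
    by_cases hyv : y.1 = v
    · rw [hleaf y x hyv hxy.symm]
    · exact Adj.reachable (by simpa [r, hxv, hyv] using hxy)
  have hreach : ∀ x y, (G.induce (insert v t)).Reachable x y →
      (G.induce t).Reachable (r x) (r y) := by
    simp only [reachable_iff_reflTransGen] at hadj ⊢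
    exact Relation.ReflTransGen.lift' r hadj
  symm
  refine Nat.card_eq_of_bijective (ConnectedComponent.map ι) ⟨?_, ?_⟩
  · refine ConnectedComponent.ind₂ fun x y h => ?_
    rw [ConnectedComponent.map_mk, ConnectedComponent.map_mk, ConnectedComponent.eq] at h
    have := hreach _ _ h
    rwa [hrt _ x.2, hrt _ y.2, ← ConnectedComponent.eq] at this
  · refine ConnectedComponent.ind fun ⟨x, hx⟩ => ?_
    rcases hx with hxv | hx
    · refine ⟨G.induce t |>.connectedComponentMk ⟨u, hu⟩, ?_⟩
      rw [ConnectedComponent.map_mk, ConnectedComponent.eq]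
      exact Adj.reachable (G := G.induce (insert v t)) (hxv ▸ hvu.symm)
    · exact ⟨G.induce t |>.connectedComponentMk ⟨x, hx⟩, rfl⟩

end SimpleGraph

section Forest

variable {V : Type} [DecidableEq V] {G : SimpleGraph V}

theorem card_indepPartitions_of_forall_not_adj_eq_sum {s : Finset V} {m c : ℕ}
    (h : ∀ a ∈ s, ∀ b ∈ s, ¬ G.Adj a b) (hs : #s = m + 1)
    (hc : Nat.card (G.induce (s : Set V)).ConnectedComponent = c) (k : ℕ) :
    #(indepPartitions G s (k + 1)) = ∑ i ∈ range c, (c - 1).choose i * stirling2 (m - i) k := by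
  rw [card_connectedComponent_of_forall_not_adj (H := G.induce (s : Set V))
    fun a b => h a a.2 b b.2, Nat.card_coe_set_eq, Set.ncard_coe_finset, hs] at hc
  rw [← hc, card_indepPartitions_of_forall_not_adj h, hs, stirling2_succ_succ_eq_sum,
    Nat.add_sub_cancel]

theorem card_indepPartitions_insert_leaf_eq_sum {t : Finset V} {v u : V} {m c : ℕ} (hv : v ∉ t)
    (hu : u ∈ t) (hvu : G.Adj v u) (huniq : ∀ w ∈ t, G.Adj v w → w = u) (ht : #t = m + 1)
    (hc : Nat.card (G.induce (t : Set V)).ConnectedComponent = c)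
    (ih : ∀ k, #(indepPartitions G t (k + 1)) =
      ∑ i ∈ range c, (c - 1).choose i * stirling2 (m - i) k) (k : ℕ) :
    #(indepPartitions G (insert v t) (k + 1)) =
      ∑ i ∈ range c, (c - 1).choose i * stirling2 (m + 1 - i) k := by
  have hcm : c ≤ m + 1 := by
    rw [← hc, ← ht, ← Set.ncard_coe_finset, ← Nat.card_coe_set_eq]
    exact card_connectedComponent_le _
  rw [card_indepPartitions_insert_leaf hv hu hvu huniq]
  cases k with
  | zero =>
    rw [indepPartitions_zero ⟨u, hu⟩, card_empty, zero_mul,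
      sum_range_mul_stirling2_succ_sub_zero _ hcm, add_zero]
  | succ k =>
    rw [ih, ih, sum_range_mul_stirling2_succ_sub_succ _ hcm]
    ring

theorem card_indepPartitions_of_isAcyclic (hG : G.IsAcyclic) {s : Finset V} {m c : ℕ}
    (hs : #s = m + 1) (hc : Nat.card (G.induce (s : Set V)).ConnectedComponent = c) (k : ℕ) :
    #(indepPartitions G s (k + 1)) = ∑ i ∈ range c, (c - 1).choose i * stirling2 (m - i) k := by
  induction m generalizing s c k with
  | zero =>
    obtain ⟨a, rfl⟩ := card_eq_one.1 hs
    exact card_indepPartitions_of_forall_not_adj_eq_sum (by simp) hs hc k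
  | succ m ih =>
    by_cases hedge : ∀ a ∈ s, ∀ b ∈ s, ¬ G.Adj a b
    · exact card_indepPartitions_of_forall_not_adj_eq_sum hedge hs hc k
    push Not at hedge
    obtain ⟨v, hv, u, hu, hvu, huniq⟩ := hG.exists_adj_forall_adj_eq_induce hedge
    obtain ⟨t, hvt, rfl⟩ : ∃ t, v ∉ t ∧ s = insert v t :=
      ⟨s.erase v, notMem_erase v s, (insert_erase hv).symm⟩
    have hut : u ∈ t := (mem_insert.1 hu).resolve_left hvu.ne'
    have huniq' : ∀ w ∈ t, G.Adj v w → w = u := fun w hw => huniq w (mem_insert_of_mem hw)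
    rw [coe_insert, card_connectedComponent_induce_insert hvt hut hvu huniq'] at hc
    rw [card_insert_of_notMem hvt, Nat.add_right_cancel_iff] at hs
    exact card_indepPartitions_insert_leaf_eq_sum hvt hut hvu huniq' hs hc (ih hs hc) k

theorem graphStirling_eq_card_indepPartitions [Fintype V] (G : SimpleGraph V) (k : ℕ) :
    graphStirling G k = #(indepPartitions G univ k) := by
  rw [graphStirling, ← Fintype.card_coe, ← Nat.card_eq_fintype_card]
  refine Nat.card_congr
    { toFun := fun P => ⟨P.1.parts, mem_indepPartitions.2 ⟨⟨fun p hp => P.1.subset hp,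
        fun a ha => P.1.exists_mem ha, fun p hp q hq a hap haq => P.1.eq_of_mem_parts hp hq hap haq,
        P.1.empty_notMem_parts, P.2.2⟩, P.2.1⟩⟩
      invFun := fun C =>
        have hC := mem_indepPartitions.1 C.2
        ⟨.ofExistsUnique C.1 hC.1.subset (fun a ha => hC.1.existsUnique_mem ha) hC.1.empty_notMem,
          hC.2, hC.1.indep⟩
      left_inv := fun P => Subtype.ext (Finpartition.ext rfl)
      right_inv := fun C => rfl }

end Forest

theorem forest_graphStirling_eq {V : Type} [Fintype V] [DecidableEq V]
    (G : SimpleGraph V) (hG : G.IsAcyclic) (n c : ℕ)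
    (hn : Fintype.card V = n) (hc : Nat.card G.ConnectedComponent = c)
    (hc1 : 1 ≤ c) (hcn : c ≤ n) (k : ℕ) (hk : 1 ≤ k) :
    graphStirling G k =
      ∑ i ∈ Finset.range c, Nat.choose (c - 1) i * stirling2 (n - 1 - i) (k - 1) := by
  obtain ⟨m, rfl⟩ : ∃ m, n = m + 1 := ⟨n - 1, by omega⟩
  obtain ⟨k, rfl⟩ : ∃ j, k = j + 1 := ⟨k - 1, by omega⟩
  have hc' : Nat.card (G.induce ((univ : Finset V) : Set V)).ConnectedComponent = c := by
    rw [coe_univ, ← hc]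
    exact Nat.card_congr G.induceUnivIso.connectedComponentEquiv
  rw [graphStirling_eq_card_indepPartitions,
    card_indepPartitions_of_isAcyclic hG (by rw [card_univ, hn]) hc']
  simp only [Nat.add_sub_cancel]
end

section
/- For a tree T on n ≥ 1 vertices, the number of partitions of the vertex set of T into k non-empty independent sets equals S(n-1, k-1), the ordinary Stirling number of the second kind. -/
open Finset SimpleGraph Polynomial

/-!
Sorting the proper colourings of `G` with `x` colours by their partitions into colour classes
gives `χ_G(x) = ∑ₖ S(G,k) x⁽ᵏ⁾`, where `x⁽ᵏ⁾ = x(x-1)⋯(x-k+1)`. Rooting a tree `T` at `r`, a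
proper colouring is a colour for `r` together with, for every other vertex, one of the `x - 1`
colours not used by its parent, so `χ_T(x) = x(x-1)^(n-1) = ∑ⱼ S(n-1,j) x⁽ʲ⁺¹⁾`. Falling
factorials are linearly independent, so the two expansions have the same coefficients.
-/

lemma stirling2_eq_stirlingSecond : stirling2 = Nat.stirlingSecond := by
  funext n k
  induction n generalizing k with
  | zero => cases k <;> rfl
  | succ n ih => cases k <;> simp [stirling2, Nat.stirlingSecond_succ_succ, ih]

namespace Nat

lemma mul_descFactorial (x k : ℕ) :
    x * x.descFactorial k = x.descFactorial (k + 1) + k * x.descFactorial k := by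
  rcases lt_or_ge x k with h | h
  · simp [descFactorial_of_lt h]
  · rw [descFactorial_succ, ← add_mul, Nat.sub_add_cancel h]

theorem pow_eq_sum_stirlingSecond_mul_descFactorial (x m : ℕ) :
    x ^ m = ∑ k ∈ range (m + 1), stirlingSecond m k * x.descFactorial k := by
  induction m with
  | zero => simp
  | succ m ih =>
    have hshift : ∑ k ∈ range (m + 1), k * stirlingSecond m k * x.descFactorial k =
        ∑ k ∈ range (m + 1), (k + 1) * stirlingSecond m (k + 1) * x.descFactorial (k + 1) := by
      rw [sum_range_succ', sum_range_succ, stirlingSecond_eq_zero_of_lt m.lt_succ_self]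
      simp
    calc x ^ (m + 1)
        = ∑ k ∈ range (m + 1), (stirlingSecond m k * x.descFactorial (k + 1)
            + k * stirlingSecond m k * x.descFactorial k) := by
          rw [pow_succ', ih, mul_sum]
          exact sum_congr rfl fun k _ => by rw [mul_left_comm, mul_descFactorial]; ring
      _ = ∑ k ∈ range (m + 1), stirlingSecond (m + 1) (k + 1) * x.descFactorial (k + 1) := by
          rw [sum_add_distrib, hshift, ← sum_add_distrib]
          exact sum_congr rfl fun k _ => by rw [stirlingSecond_succ_succ]; ring
      _ = ∑ k ∈ range (m + 1 + 1), stirlingSecond (m + 1) k * x.descFactorial k := by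
          rw [sum_range_succ' _ (m + 1)]
          simp

theorem eq_of_forall_sum_mul_descFactorial_eq {N : ℕ} {a b : ℕ → ℕ}
    (h : ∀ x : ℕ,
      ∑ k ∈ range N, a k * x.descFactorial k = ∑ k ∈ range N, b k * x.descFactorial k)
    {m : ℕ} (hm : m < N) : a m = b m := by
  induction m using Nat.strong_induction_on with
  | _ m ih =>
    have htrunc (c : ℕ → ℕ) : ∑ k ∈ range N, c k * m.descFactorial k
        = ∑ k ∈ range m, c k * m.descFactorial k + c m * m ! := by
      rw [← descFactorial_self, ← sum_range_succ]
      refine (sum_subset (range_subset_range.2 hm) fun k _ hkm => ?_).symm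
      rw [descFactorial_of_lt (by simpa using hkm), mul_zero]
    have hm' := h m
    rw [htrunc, htrunc, sum_congr rfl fun k hk =>
      by rw [ih k (mem_range.1 hk) ((mem_range.1 hk).trans hm)]] at hm'
    exact Nat.eq_of_mul_eq_mul_right m.factorial_pos (Nat.add_left_cancel hm')

end Nat

lemma Finpartition.eq_of_forall_part_eq {α : Type*} [DecidableEq α] {s : Finset α}
    {P Q : Finpartition s} (h : ∀ a ∈ s, P.part a = Q.part a) : P = Q := by
  ext t
  constructor <;> intro ht
  · obtain ⟨a, ha, rfl⟩ := P.part_surjOn ht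
    exact h a ha ▸ Q.part_mem.2 ha
  · obtain ⟨a, ha, rfl⟩ := Q.part_surjOn ht
    exact h a ha ▸ P.part_mem.2 ha

lemma Finpartition.mem_part_iff_part_eq_part_univ {α : Type*} [Fintype α] [DecidableEq α]
    (P : Finpartition (univ : Finset α)) (a b : α) : b ∈ P.part a ↔ P.part a = P.part b := by
  rw [P.mem_part_iff_part_eq_part (mem_univ b) (mem_univ a), eq_comm]

section Fibers

variable {V α : Type*} [Fintype V] [DecidableEq V] [DecidableEq α]

def fiberPartition (f : V → α) : Finpartition (univ : Finset V) :=
  Finpartition.ofSetoid (Setoid.ker f)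

lemma part_fiberPartition_eq_iff {f : V → α} {a b : V} :
    (fiberPartition f).part a = (fiberPartition f).part b ↔ f a = f b :=
  (Finpartition.mem_part_iff_part_eq_part_univ _ a b).symm.trans
    Finpartition.mem_part_ofSetoid_iff_rel

lemma fiberPartition_eq_iff {f : V → α} {P : Finpartition (univ : Finset V)} :
    fiberPartition f = P ↔ ∀ a b, P.part a = P.part b ↔ f a = f b := by
  refine ⟨fun h => h ▸ fun _ _ => part_fiberPartition_eq_iff, fun h => ?_⟩
  refine Finpartition.eq_of_forall_part_eq fun a _ => Finset.ext fun b => ?_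
  simp only [Finpartition.mem_part_iff_part_eq_part_univ, h, part_fiberPartition_eq_iff]

noncomputable def fiberPartitionEquiv [Fintype α] (P : Finpartition (univ : Finset V)) :
    (P.parts ↪ α) ≃ {f : V → α // fiberPartition f = P} :=
  Equiv.ofBijective
    (fun g => ⟨fun v => g ⟨P.part v, P.part_mem.2 (mem_univ v)⟩, fiberPartition_eq_iff.2
      fun a b => by rw [g.injective.eq_iff, Subtype.mk.injEq]⟩)
    (by
      constructor
      · intro g₁ g₂ h
        ext ⟨p, hp⟩
        obtain ⟨a, -, rfl⟩ := P.part_surjOn hp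
        exact congrFun (congrArg Subtype.val h) a
      · rintro ⟨f, hf⟩
        have hf := fiberPartition_eq_iff.1 hf
        choose a ha using fun p : P.parts => P.nonempty_of_mem_parts p.2
        have hpart (p : P.parts) : P.part (a p) = p := P.part_eq_of_mem p.2 (ha p)
        refine ⟨⟨fun p => f (a p), fun p q hpq => Subtype.ext ?_⟩,
          Subtype.ext (funext fun v => ?_)⟩
        · rw [← hpart p, ← hpart q]
          exact (hf _ _).2 hpq
        · exact (hf _ _).1 (hpart _))

lemma card_fiberPartition_eq [Fintype α] (P : Finpartition (univ : Finset V)) :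
    Fintype.card {f : V → α // fiberPartition f = P} =
      (Fintype.card α).descFactorial #P.parts := by
  rw [← Fintype.card_congr (fiberPartitionEquiv P), Fintype.card_embedding_eq, Fintype.card_coe]

end Fibers

namespace SimpleGraph

variable {V : Type*} [Fintype V] [DecidableEq V]

def IsIndepFinpartition (G : SimpleGraph V) (P : Finpartition (univ : Finset V)) : Prop :=
  ∀ p ∈ P.parts, ∀ u ∈ p, ∀ v ∈ p, ¬ G.Adj u v

lemma isIndepFinpartition_iff {G : SimpleGraph V} {P : Finpartition (univ : Finset V)} :
    G.IsIndepFinpartition P ↔ ∀ u v, G.Adj u v → P.part u ≠ P.part v := by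
  refine ⟨fun h u v hadj huv => ?_, fun h p hp u hu v hv hadj => h u v hadj ?_⟩
  · exact h _ (P.part_mem.2 (mem_univ u)) u (P.mem_part (mem_univ u)) v
      ((P.mem_part_iff_part_eq_part_univ u v).2 huv) hadj
  · rw [P.part_eq_of_mem hp hu, P.part_eq_of_mem hp hv]

lemma isIndepFinpartition_fiberPartition_iff {α : Type*} [DecidableEq α] {G : SimpleGraph V}
    {f : V → α} : G.IsIndepFinpartition (fiberPartition f) ↔ ∀ u v, G.Adj u v → f u ≠ f v := by
  simp only [isIndepFinpartition_iff, ne_eq, part_fiberPartition_eq_iff]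

end SimpleGraph

theorem chromaticCount_eq_sum_graphStirling_mul_descFactorial {V : Type} [Fintype V]
    [DecidableEq V] (G : SimpleGraph V) (x : ℕ) :
    chromaticCount G x
      = ∑ k ∈ range (Fintype.card V + 1), graphStirling G k * x.descFactorial k := by
  classical
  have hcard (k : ℕ) : graphStirling G k = #{P | G.IsIndepFinpartition P ∧ #P.parts = k} := by
    rw [graphStirling, Nat.card_eq_fintype_card, Fintype.card_subtype]
    simp only [IsIndepFinpartition, and_comm]
  calc chromaticCount G x
      = #{f : V → Fin x | G.IsIndepFinpartition (fiberPartition f)} := by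
        rw [chromaticCount, Nat.card_eq_fintype_card, Fintype.card_subtype]
        simp only [isIndepFinpartition_fiberPartition_iff]
    _ = ∑ P with G.IsIndepFinpartition P, #{f : V → Fin x | fiberPartition f = P} := by
        rw [card_eq_sum_card_fiberwise (t := {P | G.IsIndepFinpartition P})
          fun f hf => by simpa using hf]
        refine sum_congr rfl fun P hP => ?_
        rw [filter_filter]
        exact congrArg card (filter_congr fun f _ =>
          ⟨And.right, fun h => ⟨h ▸ (mem_filter.1 hP).2, h⟩⟩)
    _ = ∑ P with G.IsIndepFinpartition P, x.descFactorial #P.parts := by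
        refine sum_congr rfl fun P _ => ?_
        rw [← Fintype.card_subtype, card_fiberPartition_eq, Fintype.card_fin]
    _ = ∑ k ∈ range (Fintype.card V + 1), graphStirling G k * x.descFactorial k := by
        rw [← sum_fiberwise_of_maps_to (g := fun P => #P.parts)
          (t := range (Fintype.card V + 1))]
        · refine sum_congr rfl fun k _ => ?_
          rw [hcard, filter_filter, sum_congr rfl fun P hP => by rw [(mem_filter.1 hP).2.2],
            sum_const, smul_eq_mul]
        · intro P _
          simpa [Nat.lt_succ_iff] using P.card_parts_le_card

namespace SimpleGraph

variable {V : Type*} {G : SimpleGraph V}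

lemma IsAcyclic.eq_penultimate_of_adj_of_dist_lt (hA : G.IsAcyclic) {r u v : V}
    {p : G.Walk r v} (hp : p.IsPath) (hadj : G.Adj v u) (hr : G.Reachable r u)
    (hu : G.dist r u < G.dist r v) : u = p.penultimate := by
  classical
  obtain ⟨q, hq, hqlen⟩ := hr.exists_path_of_dist
  have hv : v ∉ q.support := fun hv => by
    have := dist_le (q.takeUntil v hv)
    have := q.length_takeUntil_le_length hv
    omega
  exact hA.eq_penultimate_of_adj_end hp hadj
    (hA.mem_support_of_ne_mem_support_of_adj_of_isPath hp hq hadj hv)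

namespace Connected

variable (hG : G.Connected) (r : V)

noncomputable def parent (v : V) : V := (hG.exists_path_of_dist r v).choose.penultimate

variable {r}

lemma adj_parent {v : V} (hv : v ≠ r) : G.Adj (hG.parent r v) v :=
  Walk.adj_penultimate (Walk.not_nil_of_ne hv.symm)

lemma dist_parent_lt {v : V} (hv : v ≠ r) : G.dist r (hG.parent r v) < G.dist r v := by
  obtain ⟨-, hlen⟩ := (hG.exists_path_of_dist r v).choose_spec
  have hle := dist_le (hG.exists_path_of_dist r v).choose.dropLast
  rw [Walk.length_dropLast, hlen] at hle
  have hpos := hG.pos_dist_of_ne hv.symm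
  unfold parent
  omega

lemma eq_parent_of_adj (hA : G.IsAcyclic) {u v : V} (hadj : G.Adj v u)
    (hu : G.dist r u < G.dist r v) : u = hG.parent r v :=
  hA.eq_penultimate_of_adj_of_dist_lt (hG.exists_path_of_dist r v).choose_spec.1 hadj
    (hG r u) hu

end Connected

namespace IsTree

variable (hG : G.IsTree) {r : V}

lemma eq_parent_or_eq_parent_of_adj {a b : V} (hadj : G.Adj a b) :
    (a ≠ r ∧ b = hG.connected.parent r a) ∨ (b ≠ r ∧ a = hG.connected.parent r b) := by
  rcases lt_or_gt_of_ne (hG.dist_ne_of_adj r hadj) with h | h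
  · refine Or.inr ⟨?_, hG.connected.eq_parent_of_adj hG.isAcyclic hadj.symm h⟩
    rintro rfl
    simp at h
  · refine Or.inl ⟨?_, hG.connected.eq_parent_of_adj hG.isAcyclic hadj h⟩
    rintro rfl
    simp at h

variable (r) in
noncomputable def extendColoring [DecidableEq V] {m : ℕ} (c : Fin (m + 1))
    (g : {v : V // v ≠ r} → Fin m) (v : V) : Fin (m + 1) :=
  if h : v = r then c else (extendColoring c g (hG.connected.parent r v)).succAbove (g ⟨v, h⟩)
termination_by G.dist r v
decreasing_by exact hG.connected.dist_parent_lt h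

variable [DecidableEq V] {m : ℕ} (c : Fin (m + 1)) (g : {v : V // v ≠ r} → Fin m)

lemma extendColoring_root : hG.extendColoring r c g r = c := by
  rw [extendColoring, dif_pos rfl]

lemma extendColoring_of_ne {v : V} (hv : v ≠ r) :
    hG.extendColoring r c g v
      = (hG.extendColoring r c g (hG.connected.parent r v)).succAbove (g ⟨v, hv⟩) := by
  rw [extendColoring, dif_neg hv]

lemma extendColoring_ne_of_adj {a b : V} (hadj : G.Adj a b) :
    hG.extendColoring r c g a ≠ hG.extendColoring r c g b := by
  rcases hG.eq_parent_or_eq_parent_of_adj (r := r) hadj with ⟨ha, hb⟩ | ⟨hb, ha⟩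
  · rw [hG.extendColoring_of_ne c g ha, ← hb]
    exact Fin.succAbove_ne _ _
  · rw [hG.extendColoring_of_ne c g hb, ← ha]
    exact (Fin.succAbove_ne _ _).symm

lemma eq_extendColoring {f : V → Fin (m + 1)} (hr : f r = c)
    (hf : ∀ v (hv : v ≠ r), f v = (f (hG.connected.parent r v)).succAbove (g ⟨v, hv⟩)) :
    f = hG.extendColoring r c g := by
  funext v
  induction hd : G.dist r v using Nat.strong_induction_on generalizing v with
  | _ d ih =>
    by_cases hv : v = r
    · rw [hv, hr, extendColoring_root]
    · rw [hf v hv, extendColoring_of_ne _ _ _ hv,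
        ih _ (hd ▸ hG.connected.dist_parent_lt hv) _ rfl]

variable (r m) in
noncomputable def properColoringEquiv :
    {f : V → Fin (m + 1) // ∀ u v, G.Adj u v → f u ≠ f v}
      ≃ Fin (m + 1) × ({v : V // v ≠ r} → Fin m) where
  toFun f := (f.1 r, fun v => (finSuccAboveEquiv (f.1 (hG.connected.parent r v))).symm
    ⟨f.1 v, (f.2 _ _ (hG.connected.adj_parent v.2)).symm⟩)
  invFun cg := ⟨hG.extendColoring r cg.1 cg.2, fun _ _ => hG.extendColoring_ne_of_adj _ _⟩
  left_inv f := by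
    refine Subtype.ext (hG.eq_extendColoring _ _ rfl fun v hv => ?_).symm
    exact congrArg Subtype.val
      ((finSuccAboveEquiv (f.1 (hG.connected.parent r v))).apply_symm_apply
        ⟨f.1 v, (f.2 _ _ (hG.connected.adj_parent hv)).symm⟩).symm
  right_inv cg := by
    refine Prod.ext (hG.extendColoring_root _ _) (funext fun v => ?_)
    refine (finSuccAboveEquiv _).symm_apply_eq.2 (Subtype.ext ?_)
    exact hG.extendColoring_of_ne _ _ v.2

end IsTree

end SimpleGraph

lemma graphStirling_eq_zero_of_card_lt {V : Type} [Fintype V] [DecidableEq V]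
    (G : SimpleGraph V) {k : ℕ} (hk : Fintype.card V < k) : graphStirling G k = 0 := by
  rw [graphStirling, Nat.card_eq_zero]
  exact Or.inl ⟨fun P => by simpa [P.2.1] using (hk.trans_le' P.1.card_parts_le_card).ne⟩

lemma graphStirling_zero {V : Type} [Fintype V] [DecidableEq V] [Nonempty V]
    (G : SimpleGraph V) : graphStirling G 0 = 0 := by
  rw [graphStirling, Nat.card_eq_zero]
  refine Or.inl ⟨fun P => ?_⟩
  exact (P.1.parts_nonempty univ_nonempty.ne_empty).ne_empty (card_eq_zero.1 P.2.1)

theorem SimpleGraph.IsTree.chromaticCount_succ {V : Type} [Fintype V] [DecidableEq V]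
    {G : SimpleGraph V} (hG : G.IsTree) (m : ℕ) :
    chromaticCount G (m + 1) = (m + 1) * m ^ (Fintype.card V - 1) := by
  obtain ⟨r⟩ := hG.connected.nonempty
  rw [chromaticCount, Nat.card_congr (hG.properColoringEquiv r m), Nat.card_eq_fintype_card]
  simp [Fintype.card_subtype_compl]

theorem SimpleGraph.IsTree.sum_graphStirling_succ_mul_descFactorial {V : Type} [Fintype V]
    [DecidableEq V] {G : SimpleGraph V} (hG : G.IsTree) (y : ℕ) :
    ∑ i ∈ range (Fintype.card V), graphStirling G (i + 1) * y.descFactorial i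
      = y ^ (Fintype.card V - 1) := by
  have := hG.connected.nonempty
  refine Nat.eq_of_mul_eq_mul_left y.succ_pos ?_
  calc (y + 1) * ∑ i ∈ range (Fintype.card V), graphStirling G (i + 1) * y.descFactorial i
      = ∑ k ∈ range (Fintype.card V + 1), graphStirling G k * (y + 1).descFactorial k := by
        rw [sum_range_succ', graphStirling_zero, zero_mul, add_zero, mul_sum]
        exact sum_congr rfl fun i _ => by rw [Nat.succ_descFactorial_succ]; ring
    _ = chromaticCount G (y + 1) :=
        (chromaticCount_eq_sum_graphStirling_mul_descFactorial G _).symm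
    _ = (y + 1) * y ^ (Fintype.card V - 1) := hG.chromaticCount_succ y

theorem tree_graphStirling_eq_general {V : Type} [Fintype V] [DecidableEq V]
    (G : SimpleGraph V) (hG : G.IsTree) (n : ℕ)
    (hn : Fintype.card V = n) (k : ℕ) (hk : 1 ≤ k) :
    graphStirling G k = stirling2 (n - 1) (k - 1) := by
  subst hn
  obtain ⟨j, rfl⟩ : ∃ j, k = j + 1 := ⟨k - 1, by omega⟩
  rw [stirling2_eq_stirlingSecond, Nat.add_sub_cancel]
  have := hG.connected.nonempty
  have hV : 0 < Fintype.card V := Fintype.card_pos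
  rcases lt_or_ge j (Fintype.card V) with hj | hj
  · refine Nat.eq_of_forall_sum_mul_descFactorial_eq (a := fun i => graphStirling G (i + 1))
      (fun y => ?_) hj
    rw [hG.sum_graphStirling_succ_mul_descFactorial,
      Nat.pow_eq_sum_stirlingSecond_mul_descFactorial, Nat.sub_add_cancel hV]
  · rw [graphStirling_eq_zero_of_card_lt G (by omega), Nat.stirlingSecond_eq_zero_of_lt (by omega)]

theorem tree_graphStirling_eq {V : Type} [Fintype V] [DecidableEq V]
    (G : SimpleGraph V) (hG : G.IsTree) (n : ℕ)
    (hn : Fintype.card V = n) (hn1 : 1 ≤ n) (k : ℕ) (hk : 1 ≤ k) :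
    graphStirling G k = stirling2 (n - 1) (k - 1) :=
  tree_graphStirling_eq_general G hG n hn k hk
end

section
/- The number of partitions of the vertex set of a forest with n vertices and c components into k non-empty independent sets depends only on n and c, not on the structure of the forest. -/
open Finset SimpleGraph Polynomial

/-!
Adjoining a vertex `v` to a partition of the remaining vertices either creates the new part `{v}`
or adds `v` to an existing part containing no neighbour of `v`. When `v` has degree `d ≤ 1` this
gives `S(G, k + 1) = S(G - v, k) + (k + 1 - d) S(G - v, k + 1)`. A forest with `n` vertices and
`c` components is edgeless exactly when `c = n`, so it always has a vertex of degree
`d = [c ≠ n]` (an isolated vertex or a leaf), and removing it leaves a forest with `n - 1`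
vertices and `c - 1 + d` components. Induction on `n` then shows that `S(G, k)` is a function of
`n` and `c`.
-/

namespace Finpartition

variable {V : Type*} [DecidableEq V] {s t : Finset V} {v : V}

lemma eq_of_parts_subset {P Q : Finpartition s} (h : P.parts ⊆ Q.parts) : P = Q := by
  ext q
  refine ⟨fun hq => h hq, fun hq => ?_⟩
  obtain ⟨x, hx⟩ := Q.nonempty_of_mem_parts hq
  obtain ⟨p, hp, hxp⟩ := P.exists_mem (Q.le hq hx)
  rwa [Q.eq_of_mem_parts hq (h hp) hx hxp]

lemma subset_of_eq_empty_or_mem {P : Finpartition s} (ht : t = ∅ ∨ t ∈ P.parts) : t ⊆ s := by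
  rcases ht with rfl | ht
  · exact empty_subset s
  · exact P.le ht

lemma disjoint_of_eq_empty_or_mem {P : Finpartition s} {p : Finset V} (hp : p ∈ P.parts)
    (ht : t = ∅ ∨ t ∈ P.parts) (hpt : p ≠ t) : Disjoint p t := by
  rcases ht with rfl | ht
  · exact disjoint_empty_right p
  · exact P.disjoint hp ht hpt

lemma parts_avoid (P : Finpartition s) (ht : t = ∅ ∨ t ∈ P.parts) :
    (P.avoid t).parts = P.parts.erase t := by
  ext c
  rw [mem_avoid, mem_erase]
  constructor
  · rintro ⟨d, hd, hdt, rfl⟩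
    have hne : d ≠ t := by rintro rfl; exact hdt le_rfl
    rw [(disjoint_of_eq_empty_or_mem hd ht hne).sdiff_eq_left]
    exact ⟨hne, hd⟩
  · rintro ⟨hne, hc⟩
    have hdisj := disjoint_of_eq_empty_or_mem hc ht hne
    refine ⟨c, hc, fun hct => ?_, hdisj.sdiff_eq_left⟩
    exact P.ne_bot hc (disjoint_self.1 (hdisj.mono_right hct))

lemma notMem_of_mem_parts (hv : v ∉ s) {P : Finpartition s} {p : Finset V} (hp : p ∈ P.parts) :
    v ∉ p :=
  fun h => hv (P.le hp h)

/-- `v` joins the part `t`, or forms the new part `{v}` when `t = ∅`. -/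
def insertVertex (P : Finpartition s) (hv : v ∉ s) (ht : t = ∅ ∨ t ∈ P.parts) :
    Finpartition (insert v s) :=
  (P.avoid t).extend (b := insert v t) (insert_ne_empty v t)
    (disjoint_insert_right.2 ⟨fun h => hv (mem_sdiff.1 h).1, sdiff_disjoint⟩)
    (by rw [sup_eq_union, union_insert, sdiff_union_of_subset (subset_of_eq_empty_or_mem ht)])

def eraseVertex (Q : Finpartition (insert v s)) (hv : v ∉ s) : Finpartition s :=
  (Q.avoid {v}).copy (by rw [sdiff_singleton_eq_erase, erase_insert hv])

lemma parts_insertVertex (hv : v ∉ s) (P : Finpartition s) (ht : t = ∅ ∨ t ∈ P.parts) :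
    (P.insertVertex hv ht).parts = insert (insert v t) (P.parts.erase t) := by
  rw [insertVertex, extend_parts, parts_avoid P ht]

lemma erase_part_insertVertex (hv : v ∉ s) (P : Finpartition s) (ht : t = ∅ ∨ t ∈ P.parts) :
    ((P.insertVertex hv ht).part v).erase v = t := by
  rw [part_eq_of_mem _ (by simp [insertVertex]) (mem_insert_self v t),
    erase_insert fun h => hv (subset_of_eq_empty_or_mem ht h)]

lemma eraseVertex_insertVertex (hv : v ∉ s) (P : Finpartition s) (ht : t = ∅ ∨ t ∈ P.parts) :
    (P.insertVertex hv ht).eraseVertex hv = P := by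
  refine (eq_of_parts_subset fun p hp => ?_).symm
  have hvp := notMem_of_mem_parts hv hp
  have hp_ne : ¬p ⊆ {v} := fun h => by
    obtain ⟨x, hx⟩ := P.nonempty_of_mem_parts hp
    exact hvp (mem_singleton.1 (h hx) ▸ hx)
  simp only [eraseVertex, copy_parts, mem_avoid, parts_insertVertex hv P ht, mem_insert,
    mem_erase]
  by_cases hpt : p = t
  · subst hpt
    exact ⟨insert v p, Or.inl rfl, fun h => hp_ne ((subset_insert v p).trans h), by
      rw [insert_sdiff_of_mem _ (mem_singleton_self v), sdiff_singleton_eq_erase,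
        erase_eq_of_notMem hvp]⟩
  · exact ⟨p, Or.inr ⟨hpt, hp⟩, hp_ne, by rw [sdiff_singleton_eq_erase, erase_eq_of_notMem hvp]⟩

lemma erase_part_eq_empty_or_mem (hv : v ∉ s) (Q : Finpartition (insert v s)) :
    (Q.part v).erase v = ∅ ∨ (Q.part v).erase v ∈ (Q.eraseVertex hv).parts := by
  refine or_iff_not_imp_left.2 fun hne => ?_
  simp only [eraseVertex, copy_parts, mem_avoid]
  refine ⟨Q.part v, Q.part_mem.2 (mem_insert_self v s), fun h => hne ?_,
    sdiff_singleton_eq_erase v _⟩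
  rwa [← sdiff_singleton_eq_erase, sdiff_eq_empty_iff_subset]

lemma insertVertex_eraseVertex (hv : v ∉ s) (Q : Finpartition (insert v s)) :
    (Q.eraseVertex hv).insertVertex hv (erase_part_eq_empty_or_mem hv Q) = Q := by
  have hvQ : v ∈ Q.part v := Q.mem_part (mem_insert_self v s)
  refine (eq_of_parts_subset fun q hq => ?_).symm
  rw [parts_insertVertex, insert_erase hvQ, mem_insert, mem_erase]
  by_cases hqv : q = Q.part v
  · exact Or.inl hqv
  have hvq : v ∉ q := fun h => hqv (Q.part_eq_of_mem hq h).symm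
  obtain ⟨x, hx⟩ := Q.nonempty_of_mem_parts hq
  refine Or.inr ⟨fun h => hqv (Q.eq_of_mem_parts hq (Q.part_mem.2 (mem_insert_self v s)) hx
    (mem_of_mem_erase (h ▸ hx))), ?_⟩
  simp only [eraseVertex, copy_parts, mem_avoid]
  refine ⟨q, hq, fun h => hvq (mem_singleton.1 (h hx) ▸ hx), ?_⟩
  rw [sdiff_singleton_eq_erase, erase_eq_of_notMem hvq]

lemma exists_insertVertex_eq (hv : v ∉ s) (Q : Finpartition (insert v s)) :
    ∃ (P : Finpartition s) (t : Finset V) (ht : t = ∅ ∨ t ∈ P.parts), P.insertVertex hv ht = Q :=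
  ⟨_, _, _, Q.insertVertex_eraseVertex hv⟩

def equivToFinset (s : Set V) [Fintype s] :
    Finpartition (univ : Finset s) ≃ Finpartition s.toFinset where
  toFun Q := ofExistsUnique (Q.parts.map (mapEmbedding (Function.Embedding.subtype _)).toEmbedding)
    (fun p hp => by
      obtain ⟨q, -, rfl⟩ := mem_map.1 hp
      intro a ha
      obtain ⟨x, -, rfl⟩ := mem_map.1 ha
      exact Set.mem_toFinset.2 x.2)
    (fun a ha => by
      obtain ⟨q, ⟨hq, haq⟩, huniq⟩ := Q.existsUnique_mem (mem_univ ⟨a, Set.mem_toFinset.1 ha⟩)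
      refine ⟨_, ⟨mem_map_of_mem _ hq, mem_map_of_mem (Function.Embedding.subtype _) haq⟩, ?_⟩
      rintro _ ⟨hp, hap⟩
      obtain ⟨q', hq', rfl⟩ := mem_map.1 hp
      obtain ⟨x, hx, rfl⟩ := mem_map.1 hap
      rw [huniq q' ⟨hq', hx⟩])
    (fun h => by
      obtain ⟨q, hq, hq0⟩ := mem_map.1 h
      exact Q.empty_notMem_parts (map_eq_empty.1 hq0 ▸ hq))
  invFun P := ofExistsUnique (P.parts.image fun p => univ.filter fun x : s => x.1 ∈ p)
    (fun _ _ => subset_univ _)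
    (fun x _ => by
      obtain ⟨p, ⟨hp, hxp⟩, huniq⟩ := P.existsUnique_mem (Set.mem_toFinset.2 x.2)
      refine ⟨_, ⟨mem_image_of_mem _ hp, mem_filter.2 ⟨mem_univ x, hxp⟩⟩, ?_⟩
      rintro _ ⟨hq, hxq⟩
      obtain ⟨p', hp', rfl⟩ := mem_image.1 hq
      rw [huniq p' ⟨hp', (mem_filter.1 hxq).2⟩])
    (fun h => by
      obtain ⟨p, hp, hp0⟩ := mem_image.1 h
      obtain ⟨a, ha⟩ := P.nonempty_of_mem_parts hp
      have : (⟨a, Set.mem_toFinset.1 (P.le hp ha)⟩ : s) ∈ univ.filter fun x : s => x.1 ∈ p :=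
        mem_filter.2 ⟨mem_univ _, ha⟩
      simp [hp0] at this)
  left_inv Q := by
    ext q
    simp
  right_inv P := by
    have hmap : ∀ p ∈ P.parts,
        (univ.filter fun x : s => x.1 ∈ p).map (Function.Embedding.subtype _) = p := by
      intro p hp
      ext a
      simpa using fun ha => Set.mem_toFinset.1 (P.le hp ha)
    ext p
    simp only [ofExistsUnique_parts, mem_map, mem_image, RelEmbedding.coe_toEmbedding,
      mapEmbedding_apply]
    constructor
    · rintro ⟨_, ⟨p', hp', rfl⟩, rfl⟩
      rwa [hmap p' hp']
    · exact fun hp => ⟨_, ⟨p, hp, rfl⟩, hmap p hp⟩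

end Finpartition

namespace SimpleGraph

section IndepPartition

variable {V : Type*} [DecidableEq V] (G : SimpleGraph V) {s t : Finset V} {v : V}

def IsIndepPartition (P : Finpartition s) : Prop :=
  ∀ p ∈ P.parts, ∀ u ∈ p, ∀ w ∈ p, ¬G.Adj u w

abbrev IndepPartition (s : Finset V) (k : ℕ) : Type _ :=
  {P : Finpartition s // #P.parts = k ∧ G.IsIndepPartition P}

lemma isIndepPartition_insertVertex_iff (hv : v ∉ s) (P : Finpartition s)
    (ht : t = ∅ ∨ t ∈ P.parts) :
    G.IsIndepPartition (P.insertVertex hv ht) ↔ G.IsIndepPartition P ∧ ∀ u ∈ t, ¬G.Adj v u := by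
  simp only [IsIndepPartition, Finpartition.parts_insertVertex hv P ht]
  rw [forall_mem_insert]
  simp only [mem_erase, mem_insert]
  constructor
  · rintro ⟨hvt, hrest⟩
    refine ⟨fun p hp u hu w hw => ?_, fun u hu => hvt v (Or.inl rfl) u (Or.inr hu)⟩
    by_cases hpt : p = t
    · subst hpt
      exact hvt u (Or.inr hu) w (Or.inr hw)
    · exact hrest p ⟨hpt, hp⟩ u hu w hw
  · rintro ⟨hP, hvt⟩
    refine ⟨?_, fun p hp => hP p hp.2⟩
    have ht_indep : ∀ u ∈ t, ∀ w ∈ t, ¬G.Adj u w := by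
      rcases ht with rfl | ht
      · simp
      · exact hP t ht
    rintro u (rfl | hu) w (rfl | hw)
    · exact G.irrefl
    · exact hvt w hw
    · exact fun h => hvt u hu h.symm
    · exact ht_indep u hu w hw

lemma card_parts_insertVertex (hv : v ∉ s) (P : Finpartition s) (ht : t = ∅ ∨ t ∈ P.parts) :
    #(P.insertVertex hv ht).parts = #(P.parts.erase t) + 1 := by
  rw [Finpartition.parts_insertVertex hv P ht, card_insert_of_notMem]
  exact fun h => Finpartition.notMem_of_mem_parts hv (mem_of_mem_erase h) (mem_insert_self v t)

variable [DecidableRel G.Adj]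

def insertVertexMap (hv : v ∉ s) (k : ℕ) :
    G.IndepPartition s k ⊕
        (Σ P : G.IndepPartition s (k + 1), P.1.parts.filter fun t => ∀ u ∈ t, ¬G.Adj v u) →
      G.IndepPartition (insert v s) (k + 1)
  | .inl P => ⟨P.1.insertVertex hv (Or.inl rfl), by
      rw [card_parts_insertVertex, erase_eq_of_notMem P.1.empty_notMem_parts, P.2.1],
      (G.isIndepPartition_insertVertex_iff hv _ _).2 ⟨P.2.2, by simp⟩⟩
  | .inr ⟨P, t, ht⟩ => ⟨P.1.insertVertex hv (Or.inr (mem_filter.1 ht).1), by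
      rw [card_parts_insertVertex, card_erase_of_mem (mem_filter.1 ht).1, P.2.1,
        Nat.add_sub_cancel],
      (G.isIndepPartition_insertVertex_iff hv _ _).2 ⟨P.2.2, (mem_filter.1 ht).2⟩⟩

lemma insertVertexMap_injective (hv : v ∉ s) (k : ℕ) :
    Function.Injective (G.insertVertexMap hv k) := by
  rintro (P | ⟨P, t, ht⟩) (P' | ⟨P', t', ht'⟩) h <;>
    have hP := congrArg (fun Q => Q.1.eraseVertex hv) h <;>
    have htt := congrArg (fun Q => (Q.1.part v).erase v) h <;>
    simp only [insertVertexMap, Finpartition.eraseVertex_insertVertex,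
      Finpartition.erase_part_insertVertex] at hP htt
  · rw [Subtype.ext hP]
  · exact absurd (htt ▸ (mem_filter.1 ht').1) P'.1.empty_notMem_parts
  · exact absurd (htt.symm ▸ (mem_filter.1 ht).1) P.1.empty_notMem_parts
  · obtain rfl := Subtype.ext hP
    subst htt
    rfl

lemma insertVertexMap_surjective (hv : v ∉ s) (k : ℕ) :
    Function.Surjective (G.insertVertexMap hv k) := by
  rintro ⟨Q, hk, hQ⟩
  obtain ⟨P, t, ht, rfl⟩ := Finpartition.exists_insertVertex_eq hv Q
  rcases ht with rfl | ht
  · rw [card_parts_insertVertex, erase_eq_of_notMem P.empty_notMem_parts,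
      Nat.add_right_cancel_iff] at hk
    exact ⟨.inl ⟨P, hk, ((G.isIndepPartition_insertVertex_iff hv P _).1 hQ).1⟩, rfl⟩
  · rw [card_parts_insertVertex, card_erase_of_mem ht] at hk
    have hcard : #P.parts = k + 1 := by
      have := card_pos.2 ⟨t, ht⟩
      omega
    obtain ⟨hP, hvt⟩ := (G.isIndepPartition_insertVertex_iff hv P _).1 hQ
    exact ⟨.inr ⟨⟨P, hcard, hP⟩, t, mem_filter.2 ⟨ht, hvt⟩⟩, rfl⟩

lemma card_parts_filter_forall_not_adj (P : Finpartition s) (hN : #(s.filter (G.Adj v)) ≤ 1) :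
    #(P.parts.filter fun t => ∀ u ∈ t, ¬G.Adj v u) = #P.parts - #(s.filter (G.Adj v)) := by
  have hfilter : (P.parts.filter fun t => ∀ u ∈ t, ¬G.Adj v u) =
      P.parts \ (s.filter (G.Adj v)).image P.part := by
    ext t
    simp only [mem_filter, mem_sdiff, mem_image, and_congr_right_iff]
    intro ht
    simp only [P.part_eq_iff_mem ht, not_exists, not_and]
    exact ⟨fun h u hu hut => h u hut hu.2, fun h u hut hvu => h u ⟨P.le ht hut, hvu⟩ hut⟩
  rw [hfilter, card_sdiff_of_subset, card_image_of_injOn]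
  · exact fun a ha b hb _ => card_le_one.1 hN a ha b hb
  · intro p hp
    obtain ⟨u, hu, rfl⟩ := mem_image.1 hp
    exact P.part_mem.2 (mem_filter.1 hu).1

theorem card_indepPartition_insert (hv : v ∉ s) (hN : #(s.filter (G.Adj v)) ≤ 1) (k : ℕ) :
    Nat.card (G.IndepPartition (insert v s) (k + 1)) =
      Nat.card (G.IndepPartition s k) +
        (k + 1 - #(s.filter (G.Adj v))) * Nat.card (G.IndepPartition s (k + 1)) := by
  classical
  rw [← Nat.card_eq_of_bijective _ ⟨G.insertVertexMap_injective hv k,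
    G.insertVertexMap_surjective hv k⟩, Nat.card_sum, Nat.card_sigma]
  simp only [Nat.card_eq_finsetCard, G.card_parts_filter_forall_not_adj _ hN]
  rw [sum_congr rfl fun P _ => by rw [P.2.1], sum_const, card_univ, smul_eq_mul, mul_comm,
    ← Nat.card_eq_fintype_card]

end IndepPartition

lemma graphStirling_induce {V : Type} [DecidableEq V] (G : SimpleGraph V) (s : Set V) [Fintype s]
    (k : ℕ) :
    graphStirling (G.induce s) k = Nat.card (G.IndepPartition s.toFinset k) := by
  refine Nat.card_congr ((Finpartition.equivToFinset s).subtypeEquiv fun Q => ?_)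
  simp [Finpartition.equivToFinset, IsIndepPartition]

section GraphStirling

variable {V : Type} [Fintype V] [DecidableEq V] (G : SimpleGraph V)

theorem graphStirling_succ [DecidableRel G.Adj] {v : V} (hv : G.degree v ≤ 1) (k : ℕ) :
    graphStirling G (k + 1) = graphStirling (G.induce {v}ᶜ) k +
      (k + 1 - G.degree v) * graphStirling (G.induce {v}ᶜ) (k + 1) := by
  have hvs : v ∉ ({v}ᶜ : Set V).toFinset := by simp
  have hN : ({v}ᶜ : Set V).toFinset.filter (G.Adj v) = G.neighborFinset v := by
    ext u
    simpa using fun h => (G.ne_of_adj h).symm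
  have huniv : insert v ({v}ᶜ : Set V).toFinset = univ := by simp
  rw [← card_neighborFinset_eq_degree, ← hN] at hv ⊢
  rw [graphStirling_induce, graphStirling_induce, ← G.card_indepPartition_insert hvs hv, huniv]
  rfl

lemma graphStirling_zero : graphStirling G 0 = if Fintype.card V = 0 then 1 else 0 := by
  have hparts : ∀ P : Finpartition (univ : Finset V), P.parts = ∅ ↔ Fintype.card V = 0 :=
    fun P => by rw [P.parts_eq_empty_iff, bot_eq_empty, univ_eq_empty_iff, Fintype.card_eq_zero_iff]
  rw [graphStirling]
  split_ifs with h
  · obtain ⟨P₀⟩ := Finpartition.instNonempty (a := (univ : Finset V))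
    rw [Nat.card_eq_one_iff_unique]
    refine ⟨⟨fun P Q => Subtype.ext (Finpartition.ext ?_)⟩, ⟨P₀, ?_, fun p hp => ?_⟩⟩
    · rw [(hparts _).2 h, (hparts _).2 h]
    · rw [card_eq_zero, hparts, h]
    · simp [(hparts P₀).2 h] at hp
  · rw [Nat.card_eq_zero]
    exact .inl ⟨fun ⟨P, hP, _⟩ => h ((hparts P).1 (card_eq_zero.1 hP))⟩

lemma graphStirling_eq_zero_of_card_lt {k : ℕ} (hk : Fintype.card V < k) :
    graphStirling G k = 0 := by
  rw [graphStirling, Nat.card_eq_zero]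
  exact .inl ⟨fun ⟨P, hP, _⟩ => by simpa [hP, hk.not_ge] using P.card_parts_le_card⟩

end GraphStirling

section Forest

variable {V : Type*} (G : SimpleGraph V)

lemma card_connectedComponent_eq_card_iff [Finite V] :
    Nat.card G.ConnectedComponent = Nat.card V ↔ G = ⊥ := by
  have hsurj : Function.Surjective G.connectedComponentMk := fun c => c.exists_rep
  constructor
  · intro h
    ext a b
    refine iff_of_false (fun hab => hab.ne ?_) id
    exact (hsurj.bijective_of_nat_card_le h.ge).1 (ConnectedComponent.eq.2 hab.reachable)
  · rintro rfl
    exact (Nat.card_eq_of_bijective _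
      ⟨fun a b h => reachable_bot.1 (ConnectedComponent.eq.1 h), hsurj⟩).symm

lemma card_connectedComponent_induce_compl_singleton_of_existsUnique_adj {v : V}
    (hv : ∃! u, G.Adj v u) :
    Nat.card (G.induce {v}ᶜ).ConnectedComponent = Nat.card G.ConnectedComponent := by
  classical
  obtain ⟨u, hvu, huniq⟩ := hv
  have hu : u ∈ ({v}ᶜ : Set V) := hvu.ne.symm
  -- Retracting `v` onto its only neighbour `u` maps walks of `G` to walks of `G - v`.
  let r : V → ({v}ᶜ : Set V) := fun a => if ha : a = v then ⟨u, hu⟩ else ⟨a, ha⟩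
  have hr : ∀ a (ha : a ∈ ({v}ᶜ : Set V)), r a = ⟨a, ha⟩ := fun a ha => dif_neg ha
  have hr_adj : ∀ a b, G.Adj a b → (G.induce {v}ᶜ).Reachable (r a) (r b) := by
    intro a b hab
    by_cases ha : a = v
    · subst ha
      rw [huniq b hab, hr u hu]
      simp [r]
    by_cases hb : b = v
    · subst hb
      rw [huniq a hab.symm, hr u hu]
      simp [r]
    rw [hr a ha, hr b hb]
    exact Adj.reachable hab
  have hr_reach : ∀ a b, G.Reachable a b → (G.induce {v}ᶜ).Reachable (r a) (r b) := by
    rintro a b ⟨p⟩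
    induction p with
    | nil => rfl
    | cons h _ ih => exact (hr_adj _ _ h).trans ih
  refine Nat.card_eq_of_bijective (ConnectedComponent.map (Embedding.induce _).toHom) ⟨?_, ?_⟩
  · refine ConnectedComponent.ind₂ fun a b h => ?_
    rw [ConnectedComponent.map_mk, ConnectedComponent.map_mk, ConnectedComponent.eq] at h
    have := hr_reach a b h
    rwa [hr a a.2, hr b b.2, ← ConnectedComponent.eq] at this
  · refine ConnectedComponent.ind fun a => ⟨(G.induce {v}ᶜ).connectedComponentMk (r a), ?_⟩
    rw [ConnectedComponent.map_mk, ConnectedComponent.eq]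
    by_cases ha : a = v
    · subst ha
      simpa [r] using hvu.symm.reachable
    · rw [hr a ha]
      rfl

variable {G}

lemma IsAcyclic.exists_degree_eq_one [Fintype V] [DecidableRel G.Adj] (hG : G.IsAcyclic)
    (hne : G ≠ ⊥) : ∃ v, G.degree v = 1 := by
  obtain ⟨a, b, hab⟩ : ∃ a b, G.Adj a b := by
    by_contra! h
    exact hne (by ext a b; simpa using h a b)
  have : Nonempty V := ⟨a⟩
  -- an endpoint of a longest path is a leaf
  obtain ⟨u, w, p, hp, hmax⟩ := Walk.exists_isPath_forall_isPath_length_le_length G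
  have hnil : ¬p.Nil := by
    intro h
    have := hmax a b hab.toWalk (by simp [hab.ne])
    simp [Walk.length_eq_zero_iff.2 h] at this
  refine ⟨u, degree_eq_one_iff_existsUnique_adj.2 ⟨_, p.adj_snd hnil, fun x hx => ?_⟩⟩
  apply hG.eq_snd_of_adj_start hp hx
  by_contra hxp
  have := hmax _ _ (p.cons hx.symm) (hp.cons hxp)
  simp at this

/-- An isolated vertex if `G` is edgeless, a leaf otherwise: its degree is determined by the
numbers of vertices and of components. -/
lemma IsAcyclic.exists_vertex_removal [Fintype V] [Nonempty V] [DecidableRel G.Adj]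
    (hG : G.IsAcyclic) :
    ∃ v, G.degree v = (if Nat.card G.ConnectedComponent = Fintype.card V then 0 else 1) ∧
      Nat.card (G.induce {v}ᶜ).ConnectedComponent + 1 =
        Nat.card G.ConnectedComponent + G.degree v := by
  rw [← Nat.card_eq_fintype_card (α := V)]
  by_cases hbot : G = ⊥
  · subst hbot
    have hcard : ∀ (W : Type _) [Finite W],
        Nat.card (⊥ : SimpleGraph W).ConnectedComponent = Nat.card W :=
      fun W _ => (⊥ : SimpleGraph W).card_connectedComponent_eq_card_iff.2 rfl
    obtain ⟨v⟩ := ‹Nonempty V›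
    have hv : (⊥ : SimpleGraph V).degree v = 0 := by simp
    refine ⟨v, by rw [if_pos (hcard V), hv], ?_⟩
    rw [induce_bot, hcard, hcard, hv, Nat.card_coe_set_eq,
      ← Set.ncard_add_ncard_compl {v}, Set.ncard_singleton, add_zero, add_comm]
  · obtain ⟨v, hv⟩ := hG.exists_degree_eq_one hbot
    refine ⟨v, by rw [if_neg (G.card_connectedComponent_eq_card_iff.not.2 hbot), hv], ?_⟩
    rw [hv, G.card_connectedComponent_induce_compl_singleton_of_existsUnique_adj
      (degree_eq_one_iff_existsUnique_adj.1 hv)]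

end Forest

end SimpleGraph

theorem forest_graphStirling_depends_only_on_n_c
    {V₁ V₂ : Type} [Fintype V₁] [DecidableEq V₁] [Fintype V₂] [DecidableEq V₂]
    (G₁ : SimpleGraph V₁) (G₂ : SimpleGraph V₂)
    (h₁ : G₁.IsAcyclic) (h₂ : G₂.IsAcyclic)
    (hn : Fintype.card V₁ = Fintype.card V₂)
    (hc : Nat.card G₁.ConnectedComponent = Nat.card G₂.ConnectedComponent)
    (k : ℕ) :
    graphStirling G₁ k = graphStirling G₂ k := by
  classical
  obtain ⟨n, hn₁⟩ : ∃ n, Fintype.card V₁ = n := ⟨_, rfl⟩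
  induction n generalizing V₁ V₂ k with
  | zero =>
    rcases k with _ | k
    · rw [G₁.graphStirling_zero, G₂.graphStirling_zero, hn]
    · rw [G₁.graphStirling_eq_zero_of_card_lt (by omega),
        G₂.graphStirling_eq_zero_of_card_lt (by omega)]
  | succ n ih =>
    rcases k with _ | k
    · rw [G₁.graphStirling_zero, G₂.graphStirling_zero, hn]
    have : Nonempty V₁ := Fintype.card_pos_iff.1 (by omega)
    have : Nonempty V₂ := Fintype.card_pos_iff.1 (by omega)
    obtain ⟨v₁, hdeg₁, hc₁⟩ := h₁.exists_vertex_removal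
    obtain ⟨v₂, hdeg₂, hc₂⟩ := h₂.exists_vertex_removal
    have hdeg : G₁.degree v₁ = G₂.degree v₂ := by rw [hdeg₁, hdeg₂, hc, hn]
    have hle : G₁.degree v₁ ≤ 1 := by rw [hdeg₁]; split <;> omega
    have hcard : ∀ {V : Type} [Fintype V] [DecidableEq V] (v : V), Fintype.card V = n + 1 →
        Fintype.card ({v}ᶜ : Set V) = n := fun v h => by
      rw [Fintype.card_compl_set, h, Set.card_singleton, Nat.add_sub_cancel]
    have hn' := (hcard v₁ hn₁).trans (hcard v₂ (hn ▸ hn₁)).symm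
    have hc' : Nat.card (G₁.induce {v₁}ᶜ).ConnectedComponent =
        Nat.card (G₂.induce {v₂}ᶜ).ConnectedComponent := by omega
    rw [G₁.graphStirling_succ hle, G₂.graphStirling_succ (hdeg ▸ hle), hdeg,
      ih _ _ (h₁.induce _) (h₂.induce _) hn' hc' _ (hcard v₁ hn₁),
      ih _ _ (h₁.induce _) (h₂.induce _) hn' hc' _ (hcard v₁ hn₁)]
end

section
/- For a path P_n on n ≥ 2 vertices, the number of partitions of its vertex set into k non-empty independent sets equals S(n-1, k-1). -/
open Finset SimpleGraph Polynomial

/-! Deleting the last vertex `v` of a path maps its partitions into `k + 1` independent sets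
onto those of the shorter path into `k` sets (if `{v}` was a block) or into `k + 1` sets; in the
latter case `v` can be put back into any of the `k` blocks avoiding its unique neighbour. Hence
`S(P_{m+2}, k + 1) = k * S(P_{m+1}, k + 1) + S(P_{m+1}, k)`, which is the Stirling recurrence
shifted by one, and `S(P_1, k + 1) = S(0, k)`. -/

namespace Finpartition

variable {V : Type*} [DecidableEq V] {s : Finset V} {v : V}

def IsIndependent (G : SimpleGraph V) (P : Finpartition s) : Prop :=
  ∀ p ∈ P.parts, ∀ u ∈ p, ∀ w ∈ p, ¬ G.Adj u w

lemma subset_of_mem_insert_empty_parts (Q : Finpartition s) {p : Finset V}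
    (hp : p ∈ insert ∅ Q.parts) : p ⊆ s := by
  rcases mem_insert.1 hp with rfl | hp
  · exact empty_subset s
  · exact Q.le hp

lemma notMem_of_mem_insert_empty_parts (Q : Finpartition s) (hv : v ∉ s) {p : Finset V}
    (hp : p ∈ insert ∅ Q.parts) : v ∉ p :=
  fun h => hv (Q.subset_of_mem_insert_empty_parts hp h)

/-- Adds `v` to the part `p` of `Q`, or as a new singleton part if `p = ∅`. -/
def insertInto (Q : Finpartition s) (hv : v ∉ s) {p : Finset V} (hp : p ∈ insert ∅ Q.parts) :
    Finpartition (insert v s) :=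
  ofExistsUnique (insert (insert v p) (Q.parts.erase p))
    (by
      simp only [mem_insert, mem_erase]
      rintro t (rfl | ⟨-, ht⟩)
      · exact insert_subset_insert v (Q.subset_of_mem_insert_empty_parts hp)
      · exact (Q.le ht).trans (subset_insert v s))
    (by
      intro a ha
      simp only [mem_insert, mem_erase]
      by_cases hap : a ∈ insert v p
      · refine ⟨insert v p, ⟨Or.inl rfl, hap⟩, ?_⟩
        rintro t ⟨rfl | ⟨htp, ht⟩, hat⟩
        · rfl
        · have has : a ∈ s := Q.le ht hat
          have hp' : p ∈ Q.parts := (mem_insert.1 hp).resolve_left (by rintro rfl; simp_all)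
          have hap' : a ∈ p := by simp_all [ne_of_mem_of_not_mem has hv]
          exact absurd (Q.eq_of_mem_parts ht hp' hat hap') htp
      · have has : a ∈ s := by simp_all
        refine ⟨Q.part a, ⟨Or.inr ⟨?_, Q.part_mem.2 has⟩, Q.mem_part has⟩, ?_⟩
        · rintro h; exact hap (mem_insert_of_mem (h ▸ Q.mem_part has))
        · rintro t ⟨rfl | ⟨-, ht⟩, hat⟩
          · exact absurd hat hap
          · exact (Q.part_eq_of_mem ht hat).symm)
    (by simp [Q.empty_notMem_parts, eq_comm (a := ∅)])

lemma parts_restrict_insert (P : Finpartition (insert v s)) (hv : v ∉ s) :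
    (P.restrict (subset_insert v s)).parts = (P.parts.image (·.erase v)).erase ∅ := by
  refine congrArg (Finset.erase · ∅) (image_congr fun t ht => ?_)
  ext x
  have hts : t ⊆ insert v s := P.le ht
  simp only [inf_eq_inter, mem_inter, mem_erase]
  grind

lemma erase_part_mem_insert_restrict (P : Finpartition (insert v s)) (hv : v ∉ s) :
    (P.part v).erase v ∈ insert ∅ (P.restrict (subset_insert v s)).parts := by
  rw [parts_restrict_insert _ hv, mem_insert, mem_erase, mem_image]
  by_cases h : (P.part v).erase v = ∅
  · exact Or.inl h
  · exact Or.inr ⟨h, P.part v, P.part_mem.2 (mem_insert_self v s), rfl⟩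

variable (Q : Finpartition s) (hv : v ∉ s) {p : Finset V} (hp : p ∈ insert ∅ Q.parts)

@[simp]
lemma parts_insertInto : (Q.insertInto hv hp).parts = insert (insert v p) (Q.parts.erase p) := rfl

lemma part_insertInto_self : (Q.insertInto hv hp).part v = insert v p :=
  part_eq_of_mem _ (by simp) (mem_insert_self v p)

lemma restrict_insertInto : (Q.insertInto hv hp).restrict (subset_insert v s) = Q := by
  ext t
  have hvp : v ∉ p := Q.notMem_of_mem_insert_empty_parts hv hp
  have hpart : ∀ q ∈ Q.parts, q.erase v = q := fun q hq => erase_eq_of_notMem (hv <| Q.le hq ·)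
  have himage : (insert (insert v p) (Q.parts.erase p)).image (·.erase v) =
      insert p (Q.parts.erase p) := by
    rw [image_insert, erase_insert hvp, image_congr fun q hq => hpart q (mem_of_mem_erase hq),
      image_id']
  rw [parts_restrict_insert _ hv, parts_insertInto, himage]
  rcases mem_insert.1 hp with rfl | hp
  · simp
  · rw [insert_erase hp, erase_eq_of_notMem Q.empty_notMem_parts]

lemma insertInto_restrict (P : Finpartition (insert v s)) :
    (P.restrict (subset_insert v s)).insertInto hv (P.erase_part_mem_insert_restrict hv) = P := by
  ext t
  set T := P.part v
  have hT : T ∈ P.parts := P.part_mem.2 (mem_insert_self v s)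
  have hvT : v ∈ T := P.mem_part (mem_insert_self v s)
  suffices h : ((P.parts.image (·.erase v)).erase ∅).erase (T.erase v) = P.parts.erase T by
    rw [parts_insertInto, parts_restrict_insert _ hv, h, insert_erase hvT, insert_erase hT]
  ext q
  simp only [mem_erase, mem_image]
  have hvq : ∀ q ∈ P.parts, q ≠ T → v ∉ q :=
    fun q hq hqT hvq => hqT (P.eq_of_mem_parts hq hT hvq hvT)
  constructor
  · rintro ⟨hqT, -, q, hq, rfl⟩
    have hqT' : q ≠ T := by rintro rfl; exact hqT rfl
    rw [erase_eq_of_notMem (hvq q hq hqT')]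
    exact ⟨hqT', hq⟩
  · rintro ⟨hqT, hq⟩
    refine ⟨fun h => ?_, P.ne_empty hq, q, hq, erase_eq_of_notMem (hvq q hq hqT)⟩
    obtain ⟨x, hx⟩ := P.nonempty_of_mem_parts hq
    exact hqT (P.eq_of_mem_parts hq hT hx (erase_subset v T (h ▸ hx)))

lemma card_parts_insertInto :
    #(Q.insertInto hv hp).parts = #Q.parts + if p = ∅ then 1 else 0 := by
  rw [parts_insertInto,
    card_insert_of_notMem fun h => hv (Q.le (mem_of_mem_erase h) (mem_insert_self v p))]
  rcases mem_insert.1 hp with rfl | hp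
  · simp
  · rw [card_erase_of_mem hp, if_neg (Q.ne_empty hp)]
    have := card_pos.2 ⟨p, hp⟩
    omega

def insertEquiv (hv : v ∉ s) :
    Finpartition (insert v s) ≃ Σ Q : Finpartition s, {p // p ∈ insert ∅ Q.parts} where
  toFun P :=
    ⟨P.restrict (subset_insert v s), (P.part v).erase v, P.erase_part_mem_insert_restrict hv⟩
  invFun x := x.1.insertInto hv x.2.2
  left_inv := insertInto_restrict hv
  right_inv x := Sigma.subtype_ext (restrict_insertInto _ hv _) (by
    simp only [part_insertInto_self]
    exact erase_insert (x.1.notMem_of_mem_insert_empty_parts hv x.2.2))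

lemma isIndependent_insertInto_iff (G : SimpleGraph V) :
    (Q.insertInto hv hp).IsIndependent G ↔ Q.IsIndependent G ∧ ∀ w ∈ p, ¬ G.Adj v w := by
  simp only [IsIndependent, parts_insertInto, mem_insert, mem_erase, forall_eq_or_imp, G.irrefl,
    not_false_eq_true, true_and]
  constructor
  · rintro ⟨⟨hvp, hpp⟩, hQ⟩
    refine ⟨fun q hq => ?_, hvp⟩
    by_cases hqp : q = p
    · exact hqp ▸ fun u hu => (hpp u hu).2
    · exact hQ q ⟨hqp, hq⟩
  · rintro ⟨hQ, hvp⟩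
    have hpQ : p.Nonempty → p ∈ Q.parts :=
      fun hne => (mem_insert.1 hp).resolve_left hne.ne_empty
    exact ⟨⟨hvp, fun u hu => ⟨fun huv => hvp u hu huv.symm, hQ p (hpQ ⟨u, hu⟩) u hu⟩⟩,
      fun q hq => hQ q hq.2⟩

end Finpartition

open Finpartition

noncomputable def graphStirlingOn {V : Type*} [DecidableEq V] (G : SimpleGraph V) (s : Finset V)
    (k : ℕ) : ℕ :=
  Nat.card {P : Finpartition s // #P.parts = k ∧ P.IsIndependent G}

section

variable {V : Type*} [DecidableEq V] (G : SimpleGraph V) {s : Finset V} {v : V}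

open Classical in
lemma graphStirlingOn_eq_card (s : Finset V) (k : ℕ) :
    graphStirlingOn G s k = #{P : Finpartition s | #P.parts = k ∧ P.IsIndependent G} := by
  rw [graphStirlingOn, Nat.card_eq_fintype_card, Fintype.card_subtype]

lemma graphStirlingOn_zero (hs : s.Nonempty) : graphStirlingOn G s 0 = 0 := by
  rw [graphStirlingOn, Nat.card_eq_zero]
  left
  refine ⟨fun ⟨P, hP, _⟩ => hs.ne_empty ?_⟩
  exact P.parts_eq_empty_iff.1 (card_eq_zero.1 hP)

lemma graphStirlingOn_singleton (a : V) (k : ℕ) :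
    graphStirlingOn G {a} k = if k = 1 then 1 else 0 := by
  -- the argument `P` of `IsAtom.uniqueFinpartition` is a leaked section variable
  have : Unique (Finpartition {a}) := (isAtom_singleton a).uniqueFinpartition (P := ⊥)
  classical
  rw [graphStirlingOn_eq_card, card_filter,
    Fintype.sum_subsingleton _ (indiscrete (singleton_nonempty a).ne_empty)]
  simp [IsIndependent, eq_comm]

open Classical in
theorem graphStirlingOn_insert (hv : v ∉ s) (k : ℕ) :
    graphStirlingOn G (insert v s) (k + 1) = graphStirlingOn G s k +
      ∑ Q : Finpartition s with #Q.parts = k + 1 ∧ Q.IsIndependent G,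
        #{p ∈ Q.parts | ∀ w ∈ p, ¬ G.Adj v w} := by
  rw [graphStirlingOn_eq_card, graphStirlingOn_eq_card, card_filter, card_filter, sum_filter,
    ← (insertEquiv hv).symm.sum_comp, Fintype.sum_sigma, ← sum_add_distrib]
  refine sum_congr rfl fun Q _ => ?_
  simp only [insertEquiv, Equiv.coe_fn_symm_mk, card_parts_insertInto,
    isIndependent_insertInto_iff]
  rw [sum_coe_sort (insert ∅ Q.parts) fun p =>
      if #Q.parts + (if p = ∅ then 1 else 0) = k + 1 ∧ Q.IsIndependent G ∧
        ∀ w ∈ p, ¬ G.Adj v w then 1 else 0,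
    sum_insert Q.empty_notMem_parts]
  congr 1
  · simp
  · rw [card_filter]
    split_ifs with hQ
    · exact sum_congr rfl fun p hp => by simp [Q.ne_empty hp, hQ]
    · exact sum_eq_zero fun p hp => by simp [Q.ne_empty hp]; tauto

theorem graphStirlingOn_insert_of_adj_iff (hv : v ∉ s) {u : V} (hu : u ∈ s)
    (hadj : ∀ w ∈ s, G.Adj v w ↔ w = u) (k : ℕ) :
    graphStirlingOn G (insert v s) (k + 1) =
      k * graphStirlingOn G s (k + 1) + graphStirlingOn G s k := by
  classical
  rw [graphStirlingOn_insert G hv, add_comm, graphStirlingOn_eq_card G s (k + 1), mul_comm,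
    ← smul_eq_mul, ← sum_const]
  refine congrArg (· + _) (sum_congr rfl fun Q hQ => ?_)
  have hfilter : {p ∈ Q.parts | ∀ w ∈ p, ¬ G.Adj v w} = Q.parts.erase (Q.part u) := by
    ext p
    rw [mem_filter, mem_erase, and_comm (a := p ≠ _), and_congr_right_iff]
    intro hp
    rw [Ne, eq_comm, Q.part_eq_iff_mem hp]
    exact ⟨fun h hup => h u hup ((hadj u hu).2 rfl),
      fun h w hw hvw => h ((hadj w (Q.le hp hw)).1 hvw ▸ hw)⟩
  rw [hfilter, card_erase_of_mem (Q.part_mem.2 hu), (mem_filter.1 hQ).2.1, Nat.add_sub_cancel]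

end

theorem graphStirlingOn_pathGraph_Iic {n m : ℕ} (hm : m < n) (k : ℕ) :
    graphStirlingOn (pathGraph n) (Iic ⟨m, hm⟩) (k + 1) = stirling2 m k := by
  induction m generalizing k with
  | zero =>
    rw [show Iic (⟨0, hm⟩ : Fin n) = {⟨0, hm⟩} by ext i; simp [Fin.le_def, Fin.ext_iff],
      graphStirlingOn_singleton]
    cases k <;> simp [stirling2]
  | succ m ih =>
    have hinsert :
        Iic (⟨m + 1, hm⟩ : Fin n) = insert ⟨m + 1, hm⟩ (Iic ⟨m, by omega⟩) := by
      ext i; simp [Fin.le_def, Fin.ext_iff]; omega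
    have hadj : ∀ w ∈ Iic (⟨m, by omega⟩ : Fin n),
        (pathGraph n).Adj ⟨m + 1, hm⟩ w ↔ w = ⟨m, by omega⟩ := fun w hw => by
      simp only [mem_Iic, Fin.le_def] at hw
      simp only [pathGraph_adj, Fin.ext_iff]
      omega
    rw [hinsert, graphStirlingOn_insert_of_adj_iff _ (by simp [Fin.le_def]) (by simp) hadj,
      ih (by omega)]
    cases k with
    | zero => simp [graphStirlingOn_zero _ nonempty_Iic, stirling2]
    | succ k => simp [ih (by omega), stirling2]

theorem path_graphStirling_eq (n : ℕ) (hn : 2 ≤ n) (k : ℕ) :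
    graphStirling (SimpleGraph.pathGraph n) k = stirling2 (n - 1) (k - 1) := by
  change graphStirlingOn _ univ k = _
  obtain ⟨m, rfl⟩ : ∃ m, n = m + 2 := ⟨n - 2, by omega⟩
  rcases k with _ | k
  · rw [graphStirlingOn_zero _ univ_nonempty]
    rfl
  · rw [show (univ : Finset (Fin (m + 2))) = Iic ⟨m + 1, by omega⟩ by
      ext i; simp [Fin.le_def]; omega, graphStirlingOn_pathGraph_Iic]
    rfl
end
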